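/- Let C be a collection of admissible subsets of E_{±n} satisfying axioms (SC1)–(SC4), and let B be the collection of maximal admissible subsets containing no member of C. If B ∈ B and x ∉ B with B ∪ {x} admissible, then B ∪ {x} contains a unique member D of C, and D = {x} ∪ {b ∈ B : (B ∪ {x}) − {b} ∈ B}. -/

import Mathlib

open Finset

/-- The ground set `E_{±n} = [n] ∪ [n]*`, where `(i, false)` denotes `i`
and `(i, true)` denotes `i*`. -/
abbrev EE (n : ℕ) := Fin n × Bool

/-- The involution `* : E_{±n} → E_{±n}`. -/
def estar {n : ℕ} (x : EE n) : EE n := (x.1, !x.2)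

/-- `S* = {x* : x ∈ S}`. -/
def starSet {n : ℕ} (S : Finset (EE n)) : Finset (EE n) := S.image estar

/-- A set is admissible if `S ∩ S* = ∅`. -/
def Admissible {n : ℕ} (S : Finset (EE n)) : Prop := Disjoint S (starSet S)

/-- An admissible ordering of `E_{±n}`, encoded by an injective rank function `w`
such that `x < y` implies `y* < x*`. -/
structure AdmOrdering (n : ℕ) where
  w : EE n → ℕ
  inj : Function.Injective w
  rev : ∀ x y, w x < w y → w (estar y) < w (estar x)

/-- The induced (componentwise) partial order on subsets:
compare the sorted lists of ranks entrywise. -/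
def setLE {n : ℕ} (o : AdmOrdering n) (A B : Finset (EE n)) : Prop :=
  List.Forall₂ (· ≤ ·) (Finset.sort (A.image o.w) (· ≤ ·)) (Finset.sort (B.image o.w) (· ≤ ·))

/-- The Maximality Property: for every admissible ordering, the family has a
unique maximal member in the induced partial order. -/
def HasUniqueMaximal {n : ℕ} (𝓑 : Set (Finset (EE n))) : Prop :=
  ∀ o : AdmOrdering n, ∃! M, M ∈ 𝓑 ∧ ∀ S ∈ 𝓑, setLE o M S → M = S

/-- A symplectic matroid: a nonempty family of equinumerous admissible subsets of
`E_{±n}` with a unique maximal member under every admissible ordering. -/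
def IsSymplecticMatroid {n : ℕ} (𝓑 : Set (Finset (EE n))) : Prop :=
  𝓑.Nonempty ∧ (∀ S ∈ 𝓑, Admissible S) ∧ (∀ S ∈ 𝓑, ∀ T ∈ 𝓑, S.card = T.card) ∧
    HasUniqueMaximal 𝓑

/-- The circuits of a family of bases: minimal admissible subsets of `E_{±n}`
contained in no member of `𝓑`. -/
def Circuits {n : ℕ} (𝓑 : Set (Finset (EE n))) : Set (Finset (EE n)) :=
  {C | Admissible C ∧ (∀ B ∈ 𝓑, ¬ C ⊆ B) ∧
    ∀ D ⊂ C, Admissible D → ∃ B ∈ 𝓑, D ⊆ B}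

/-- The bases determined by a circuit family: maximal admissible subsets of
`E_{±n}` containing no member of `𝓒`. -/
def BasesOf {n : ℕ} (𝓒 : Set (Finset (EE n))) : Set (Finset (EE n)) :=
  {B | Admissible B ∧ (∀ C ∈ 𝓒, ¬ C ⊆ B) ∧
    ∀ D, B ⊂ D → Admissible D → ∃ C ∈ 𝓒, C ⊆ D}

/-- `P` spans `x` if some `J ∈ 𝓒` has `J − P = {x}`. -/
def Spans {n : ℕ} (𝓒 : Set (Finset (EE n))) (P : Finset (EE n)) (x : EE n) : Prop :=
  ∃ J ∈ 𝓒, J \ P = {x}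

/-- Axiom (SC1). -/
def SC1 {n : ℕ} (𝓒 : Set (Finset (EE n))) : Prop := ∅ ∉ 𝓒

/-- Axiom (SC2). -/
def SC2 {n : ℕ} (𝓒 : Set (Finset (EE n))) : Prop :=
  ∀ C₁ ∈ 𝓒, ∀ C₂ ∈ 𝓒, C₁ ⊆ C₂ → C₁ = C₂

/-- Axiom (SC3): circuit elimination when the union is admissible. -/
def SC3 {n : ℕ} (𝓒 : Set (Finset (EE n))) : Prop :=
  ∀ C₁ ∈ 𝓒, ∀ C₂ ∈ 𝓒, C₁ ≠ C₂ → Admissible (C₁ ∪ C₂) →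
    ∀ x ∈ C₁ ∩ C₂, ∃ C ∈ 𝓒, C ⊆ (C₁ ∪ C₂) \ {x}

/-- Axiom (SC4): no small admissible set spans all of `E_{±n} − (P ∪ P*)`. -/
def SC4 {n : ℕ} (𝓒 : Set (Finset (EE n))) : Prop :=
  ∀ P : Finset (EE n), Admissible P → ∀ B ∈ BasesOf 𝓒, P.card < B.card →
    ∃ x, x ∉ P ∪ starSet P ∧ ¬ Spans 𝓒 P x

/-!
By maximality of `B`, the admissible set `B ∪ {x}` contains a circuit `D`, and every such circuit
contains `x`; eliminating `x` from two of them with (SC3) would leave a circuit inside `B`, so `D`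
is unique. For `b ∈ B`, the set `(B ∪ {x}) − {b}` contains `D` unless `b ∈ D`; when `b ∈ D` it is
circuit-free of size `|B|`, and (SC4) shows no basis is larger than `B`, so it is a basis.
-/

section

variable {n : ℕ}

@[simp]
lemma estar_estar (x : EE n) : estar (estar x) = x := by
  simp [estar]

lemma estar_ne_self (x : EE n) : estar x ≠ x := by
  simp [estar, Prod.ext_iff]

lemma mem_starSet {S : Finset (EE n)} {x : EE n} : x ∈ starSet S ↔ estar x ∈ S := by
  simp only [starSet, mem_image]
  exact ⟨fun ⟨y, hy, hyx⟩ => hyx ▸ (estar_estar y).symm ▸ hy, fun h => ⟨estar x, h, estar_estar x⟩⟩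

lemma Admissible.mono {S T : Finset (EE n)} (hS : Admissible S) (hTS : T ⊆ S) :
    Admissible T :=
  disjoint_left.2 fun _ ha ha' =>
    disjoint_left.1 hS (hTS ha) (mem_starSet.2 (hTS (mem_starSet.1 ha')))

lemma Admissible.insert {S : Finset (EE n)} {y : EE n} (hS : Admissible S)
    (hy : y ∉ S ∪ starSet S) : Admissible (insert y S) := by
  rw [mem_union, not_or, mem_starSet] at hy
  refine disjoint_left.2 fun a ha ha' => ?_
  rw [mem_starSet, mem_insert] at ha'
  rcases mem_insert.1 ha with rfl | haS
  · exact ha'.elim (estar_ne_self a) hy.2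
  · rcases ha' with h | h
    · exact hy.2 (h ▸ (estar_estar a).symm ▸ haS)
    · exact disjoint_left.1 hS haS (mem_starSet.2 h)

variable {𝓒 : Set (Finset (EE n))}

lemma exists_mem_basesOf_superset {E : Finset (EE n)} (hE : Admissible E)
    (hfree : ∀ C ∈ 𝓒, ¬ C ⊆ E) : ∃ B ∈ BasesOf 𝓒, E ⊆ B := by
  classical
  let s := univ.filter fun F => E ⊆ F ∧ Admissible F ∧ ∀ C ∈ 𝓒, ¬ C ⊆ F
  have hEs : E ∈ s := by simpa [s] using ⟨hE, hfree⟩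
  obtain ⟨F, hFs, hmax⟩ := exists_max_image s card ⟨E, hEs⟩
  simp only [s, mem_filter, mem_univ, true_and] at hmax hFs
  obtain ⟨hEF, hFadm, hFfree⟩ := hFs
  refine ⟨F, ⟨hFadm, hFfree, fun D hFD hDadm => ?_⟩, hEF⟩
  by_contra! hDfree
  exact (card_lt_card hFD).not_ge (hmax D ⟨hEF.trans hFD.subset, hDadm, hDfree⟩)

lemma mem_of_subset_insert_of_mem_basesOf {B J : Finset (EE n)} {y : EE n}
    (hB : B ∈ BasesOf 𝓒) (hJ : J ∈ 𝓒) (hJsub : J ⊆ insert y B) : y ∈ J := by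
  by_contra hyJ
  exact hB.2.1 J hJ fun a ha =>
    (mem_insert.1 (hJsub ha)).resolve_left (by rintro rfl; exact hyJ ha)

lemma spans_of_mem_basesOf {B : Finset (EE n)} {y : EE n} (hB : B ∈ BasesOf 𝓒)
    (hyB : y ∉ B) (hadm : Admissible (insert y B)) : Spans 𝓒 B y := by
  obtain ⟨J, hJ, hJsub⟩ := hB.2.2 (insert y B) (ssubset_insert hyB) hadm
  refine ⟨J, hJ, Subset.antisymm (fun a ha => ?_) ?_⟩
  · rw [mem_sdiff] at ha
    exact mem_singleton.2 ((mem_insert.1 (hJsub ha.1)).resolve_right ha.2)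
  · exact singleton_subset_iff.2
      (mem_sdiff.2 ⟨mem_of_subset_insert_of_mem_basesOf hB hJ hJsub, hyB⟩)

/-- (SC4) applied to `P = B`: a larger basis would leave some `y ∉ B ∪ B*` unspanned by `B`,
yet `B ∪ {y}` is admissible and so contains a circuit through `y`. -/
lemma card_le_card_of_mem_basesOf (h4 : SC4 𝓒) {B B' : Finset (EE n)}
    (hB : B ∈ BasesOf 𝓒) (hB' : B' ∈ BasesOf 𝓒) : B'.card ≤ B.card := by
  by_contra! hlt
  obtain ⟨y, hy, hns⟩ := h4 B hB.1 B' hB' hlt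
  exact hns (spans_of_mem_basesOf hB (fun h => hy (mem_union_left _ h))
    (Admissible.insert hB.1 hy))

lemma eq_of_subset_insert_of_mem_basesOf (h3 : SC3 𝓒) {B D D' : Finset (EE n)} {y : EE n}
    (hB : B ∈ BasesOf 𝓒) (hadm : Admissible (insert y B)) (hD : D ∈ 𝓒)
    (hDsub : D ⊆ insert y B) (hD' : D' ∈ 𝓒) (hD'sub : D' ⊆ insert y B) : D' = D := by
  by_contra hne
  obtain ⟨C, hC, hCsub⟩ := h3 D' hD' D hD hne (hadm.mono (union_subset hD'sub hDsub)) y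
    (mem_inter.2 ⟨mem_of_subset_insert_of_mem_basesOf hB hD' hD'sub,
      mem_of_subset_insert_of_mem_basesOf hB hD hDsub⟩)
  refine hB.2.1 C hC (hCsub.trans ?_)
  calc (D' ∪ D) \ {y} ⊆ insert y B \ {y} := sdiff_subset_sdiff (union_subset hD'sub hDsub) le_rfl
    _ ⊆ B := by rw [insert_sdiff_of_mem _ (mem_singleton_self y)]; exact sdiff_subset

lemma mem_iff_insert_sdiff_singleton_mem_basesOf (h3 : SC3 𝓒) (h4 : SC4 𝓒)
    {B D : Finset (EE n)} {y a : EE n} (hB : B ∈ BasesOf 𝓒) (hyB : y ∉ B)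
    (hadm : Admissible (insert y B)) (hD : D ∈ 𝓒) (hDsub : D ⊆ insert y B) (haB : a ∈ B) :
    a ∈ D ↔ insert y B \ {a} ∈ BasesOf 𝓒 := by
  refine ⟨fun haD => ?_, fun hbasis => ?_⟩
  · have hfree : ∀ C ∈ 𝓒, ¬ C ⊆ insert y B \ {a} := fun C hC hCsub => by
      obtain rfl := eq_of_subset_insert_of_mem_basesOf h3 hB hadm hD hDsub hC
        (hCsub.trans sdiff_subset)
      exact (mem_sdiff.1 (hCsub haD)).2 (mem_singleton_self a)
    obtain ⟨B', hB', hsub⟩ := exists_mem_basesOf_superset (hadm.mono sdiff_subset) hfree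
    have hcard : (insert y B \ {a}).card = B.card := by
      rw [card_sdiff_of_subset (singleton_subset_iff.2 (mem_insert_of_mem haB)),
        card_insert_of_notMem hyB, card_singleton, Nat.add_sub_cancel]
    rwa [eq_of_subset_of_card_le hsub (hcard ▸ card_le_card_of_mem_basesOf h4 hB hB')]
  · by_contra haD
    exact hbasis.2.1 D hD fun c hc =>
      mem_sdiff.2 ⟨hDsub hc, fun hca => haD (mem_singleton.1 hca ▸ hc)⟩

end

open scoped Classical in
theorem unique_circuit_from_axioms_general {n : ℕ} (𝓒 : Set (Finset (EE n)))
    (h3 : SC3 𝓒) (h4 : SC4 𝓒)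
    (B : Finset (EE n)) (hB : B ∈ BasesOf 𝓒) (x : EE n) (hx : x ∉ B)
    (hadm' : Admissible (insert x B)) :
    insert x (B.filter (fun b => insert x B \ {b} ∈ BasesOf 𝓒)) ∈ 𝓒 ∧
    insert x (B.filter (fun b => insert x B \ {b} ∈ BasesOf 𝓒)) ⊆ insert x B ∧
    ∀ D ∈ 𝓒, D ⊆ insert x B →
      D = insert x (B.filter (fun b => insert x B \ {b} ∈ BasesOf 𝓒)) := by
  obtain ⟨D, hD, hDsub⟩ := hB.2.2 (insert x B) (ssubset_insert hx) hadm'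
  have hfundamental : insert x (B.filter fun b => insert x B \ {b} ∈ BasesOf 𝓒) = D := by
    ext a
    rw [mem_insert, mem_filter]
    by_cases hax : a = x
    · subst hax
      simpa using mem_of_subset_insert_of_mem_basesOf hB hD hDsub
    · have hiff (haB : a ∈ B) :=
        mem_iff_insert_sdiff_singleton_mem_basesOf h3 h4 hB hx hadm' hD hDsub haB
      simp only [hax, false_or]
      refine ⟨fun ⟨haB, hbasis⟩ => (hiff haB).2 hbasis, fun haD => ?_⟩
      have haB := (mem_insert.1 (hDsub haD)).resolve_left hax
      exact ⟨haB, (hiff haB).1 haD⟩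
  rw [hfundamental]
  exact ⟨hD, hDsub, fun D' hD' hD'sub =>
    eq_of_subset_insert_of_mem_basesOf h3 hB hadm' hD hDsub hD' hD'sub⟩

open scoped Classical in
/-- Claim 2: under (SC1)–(SC4), if `B` is a maximal `𝓒`-free
admissible set, `x ∉ B` and `B ∪ {x}` is admissible, then `B ∪ {x}` contains a
unique member of `𝓒`, namely `{x} ∪ {b ∈ B : (B ∪ {x}) − {b} ∈ BasesOf 𝓒}`. -/
theorem unique_circuit_from_axioms {n : ℕ} (𝓒 : Set (Finset (EE n)))
    (hadm : ∀ C ∈ 𝓒, Admissible C)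
    (h1 : SC1 𝓒) (h2 : SC2 𝓒) (h3 : SC3 𝓒) (h4 : SC4 𝓒)
    (B : Finset (EE n)) (hB : B ∈ BasesOf 𝓒) (x : EE n) (hx : x ∉ B)
    (hadm' : Admissible (insert x B)) :
    insert x (B.filter (fun b => insert x B \ {b} ∈ BasesOf 𝓒)) ∈ 𝓒 ∧
    insert x (B.filter (fun b => insert x B \ {b} ∈ BasesOf 𝓒)) ⊆ insert x B ∧
    ∀ D ∈ 𝓒, D ⊆ insert x B →
      D = insert x (B.filter (fun b => insert x B \ {b} ∈ BasesOf 𝓒)) :=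
  unique_circuit_from_axioms_general 𝓒 h3 h4 B hB x hx hadm'
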